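/- Let β > 0. There is no voting rule f, defined on all preference profiles over nonempty subsets of a fixed three-element candidate set {a,b,c}, such that both: (i) f coincides with the majority rule on two-candidate profiles, i.e., whenever strictly more voters rank u above v in a profile over {u,v}, then f of that profile equals {u}; and (ii) f is independent of β-swap clones. Equivalently, every voting rule satisfying (i) admits a profile P over {a,b,c} and a pair of β-swap clones {x,y} in P for which the independence conditions fail for P_{-x}. -/

import Mathlib

open Finset

/-- A ranking (strict total order) of the candidate set `D ⊆ {a,b,c} = Fin 3`, encoded as a
duplicate-free list (best candidate first) whose set of elements is exactly `D`. -/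
def Ranking (D : Finset (Fin 3)) : Type := {l : List (Fin 3) // l.Nodup ∧ l.toFinset = D}

/-- The (0-indexed) position of candidate `x` in ranking `r`. -/
def rpos {D : Finset (Fin 3)} (r : Ranking D) (x : Fin 3) : ℕ := r.val.idxOf x

/-- Delete candidate `x` from a ranking. -/
def eraseCand {D : Finset (Fin 3)} (x : Fin 3) (r : Ranking D) : Ranking (D.erase x) :=
  ⟨r.val.erase x, r.2.1.erase x, by
    ext c
    simp [List.Nodup.mem_erase_iff r.2.1, Finset.mem_erase, ← r.2.2]⟩

/-!
Write `a, b, c` for the candidates `0, 1, 2` and take `N` voters `a ≻ b ≻ c`, `N` voters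
`c ≻ b ≻ a` and one voter `b ≻ c ≻ a`. The pair `{b, c}` is adjacent in every vote and `{a, b}` in
all votes but one, where they are two apart, so both are `β`-swap clones once `1 / (2N + 1) ≤ β`.
Deleting `a` leaves `b` the majority winner over `c`, and deleting `b` leaves `c` the majority
winner over `a`. Independence for the clones `{a, b}` then rules out `c` as a winner, and for
`{b, c}` it rules out `a`, so `b` wins. But independence for the clones `{b, a}`, deleting `b`,
then demands that `a` win against `c`.
-/

abbrev VotingRule : Type :=
  (D : Finset (Fin 3)) → (n : ℕ) → (Fin n → Ranking D) → Finset (Fin 3)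

def IsMajorityOnPairs (f : VotingRule) : Prop :=
  ∀ (u v : Fin 3), u ≠ v → ∀ (n : ℕ) (P : Fin n → Ranking {u, v}),
    #{i | rpos (P i) v < rpos (P i) u} < #{i | rpos (P i) u < rpos (P i) v} → f {u, v} n P = {u}

theorem IsMajorityOnPairs.eq_singleton_of_eq_pair {f : VotingRule} (hf : IsMajorityOnPairs f)
    {u v : Fin 3} (huv : u ≠ v) {D : Finset (Fin 3)} (hD : D = {u, v}) {n : ℕ}
    (P : Fin n → Ranking D)
    (h : #{i | rpos (P i) v < rpos (P i) u} < #{i | rpos (P i) u < rpos (P i) v}) :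
    f D n P = {u} := by
  subst hD
  exact hf u v huv n P h

def swapGap {D : Finset (Fin 3)} (r : Ranking D) (x y : Fin 3) : ℝ :=
  (((rpos r x : ℤ) - (rpos r y : ℤ)).natAbs : ℝ) - 1

noncomputable def swapDistance {D : Finset (Fin 3)} {n : ℕ} (P : Fin n → Ranking D)
    (x y : Fin 3) : ℝ :=
  (∑ i, swapGap (P i) x y) / n

theorem swapGap_comm {D : Finset (Fin 3)} (r : Ranking D) (x y : Fin 3) :
    swapGap r x y = swapGap r y x := by
  unfold swapGap
  rw [← Int.natAbs_neg, neg_sub]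

theorem swapDistance_comm {D : Finset (Fin 3)} {n : ℕ} (P : Fin n → Ranking D) (x y : Fin 3) :
    swapDistance P x y = swapDistance P y x := by
  simp only [swapDistance, swapGap_comm]

section BlockProfile

variable {D : Finset (Fin 3)} (N : ℕ) (r s t : Ranking D)

def blockProfile : Fin (N + N + 1) → Ranking D :=
  Fin.append (Fin.append (fun _ => r) (fun _ => s)) (fun _ : Fin 1 => t)

theorem sum_blockProfile {M : Type*} [AddCommMonoid M] (g : Ranking D → M) :
    ∑ i, g (blockProfile N r s t i) = N • g r + N • g s + g t := by
  simp only [blockProfile, Fin.sum_univ_add, Fin.append_left, Fin.append_right, sum_const,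
    card_univ, Fintype.card_fin, one_smul]

theorem card_filter_blockProfile (p : Ranking D → Prop) [DecidablePred p] :
    #{i | p (blockProfile N r s t i)} =
      (if p r then N else 0) + (if p s then N else 0) + if p t then 1 else 0 := by
  simp [card_filter, sum_blockProfile (g := fun q => if p q then 1 else 0)]

theorem swapDistance_blockProfile (x y : Fin 3) :
    swapDistance (blockProfile N r s t) x y =
      (N * swapGap r x y + N * swapGap s x y + swapGap t x y) / (N + N + 1 : ℕ) := by
  rw [swapDistance, sum_blockProfile N r s t (swapGap · x y), nsmul_eq_mul, nsmul_eq_mul]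

end BlockProfile

def abc : Ranking univ := ⟨[0, 1, 2], by decide, by decide⟩
def cba : Ranking univ := ⟨[2, 1, 0], by decide, by decide⟩
def bca : Ranking univ := ⟨[1, 2, 0], by decide, by decide⟩

abbrev cloneProfile (N : ℕ) : Fin (N + N + 1) → Ranking univ := blockProfile N abc cba bca

theorem swapDistance_cloneProfile_zero_one (N : ℕ) :
    swapDistance (cloneProfile N) 0 1 = 1 / (N + N + 1 : ℕ) := by
  rw [swapDistance_blockProfile]
  norm_num +decide [swapGap, rpos, abc, cba, bca]

theorem swapDistance_cloneProfile_one_two (N : ℕ) :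
    swapDistance (cloneProfile N) 1 2 = 0 := by
  rw [swapDistance_blockProfile]
  norm_num +decide [swapGap, rpos, abc, cba, bca]

theorem IsMajorityOnPairs.erase_zero_cloneProfile {f : VotingRule}
    (hf : IsMajorityOnPairs f) (N : ℕ) :
    f (univ.erase 0) _ (fun i => eraseCand 0 (cloneProfile N i)) = {1} := by
  have hD : (univ : Finset (Fin 3)).erase 0 = {1, 2} := by decide
  refine hf.eq_singleton_of_eq_pair (by decide) hD _ ?_
  simp only
    [card_filter_blockProfile (p := fun r => rpos (eraseCand 0 r) 2 < rpos (eraseCand 0 r) 1),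
      card_filter_blockProfile (p := fun r => rpos (eraseCand 0 r) 1 < rpos (eraseCand 0 r) 2)]
  simp [rpos, eraseCand, abc, cba, bca]

theorem IsMajorityOnPairs.erase_one_cloneProfile {f : VotingRule}
    (hf : IsMajorityOnPairs f) (N : ℕ) :
    f (univ.erase 1) _ (fun i => eraseCand 1 (cloneProfile N i)) = {2} := by
  have hD : (univ : Finset (Fin 3)).erase 1 = {2, 0} := by decide
  refine hf.eq_singleton_of_eq_pair (by decide) hD _ ?_
  simp only
    [card_filter_blockProfile (p := fun r => rpos (eraseCand 1 r) 0 < rpos (eraseCand 1 r) 2),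
      card_filter_blockProfile (p := fun r => rpos (eraseCand 1 r) 2 < rpos (eraseCand 1 r) 0)]
  simp [rpos, eraseCand, abc, cba, bca]

/-- **Impossibility of independence of `β`-swap clones (`β > 0`).**
There is no voting rule `f`, defined on all preference profiles over nonempty subsets of
the fixed three-element candidate set `Fin 3`, such that (i) `f` coincides with the
majority rule on two-candidate profiles and (ii) `f` is independent of `β`-swap clones:
for every profile `P` with `n ≥ 1` voters and every pair `x ≠ y` of `β`-swap clones in `P`,
(1) for all `z ∉ {x,y}`, `z ∈ f(P) ↔ z ∈ f(P₋ₓ)`, and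
(2) `f(P) ∩ {x,y} ≠ ∅ ↔ y ∈ f(P₋ₓ)`. -/
theorem no_rule_indep_swap_clones (β : ℝ) (hβ : 0 < β) :
    ¬ ∃ f : (D : Finset (Fin 3)) → (n : ℕ) → (Fin n → Ranking D) → Finset (Fin 3),
      -- `f` is a voting rule: winners form a nonempty subset of the candidate set
      (∀ (D : Finset (Fin 3)) (n : ℕ) (P : Fin n → Ranking D),
        D.Nonempty → 1 ≤ n → (f D n P).Nonempty ∧ f D n P ⊆ D) ∧
      -- (i) majority rule on two-candidate profiles
      (∀ (u v : Fin 3), u ≠ v → ∀ (n : ℕ) (P : Fin n → Ranking {u, v}),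
        (univ.filter fun i => rpos (P i) v < rpos (P i) u).card <
          (univ.filter fun i => rpos (P i) u < rpos (P i) v).card →
        f {u, v} n P = {u}) ∧
      -- (ii) independence of `β`-swap clones
      (∀ (D : Finset (Fin 3)) (n : ℕ), 1 ≤ n → ∀ (P : Fin n → Ranking D) (x y : Fin 3),
        x ∈ D → y ∈ D → x ≠ y →
        (∑ i : Fin n, ((((rpos (P i) x : ℤ) - (rpos (P i) y : ℤ)).natAbs : ℝ) - 1)) / n ≤ β →
        (∀ z : Fin 3, z ≠ x → z ≠ y →
          (z ∈ f D n P ↔ z ∈ f (D.erase x) n (fun i => eraseCand x (P i)))) ∧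
        ((f D n P ∩ {x, y}).Nonempty ↔
          y ∈ f (D.erase x) n (fun i => eraseCand x (P i)))) := by
  rintro ⟨f, hrule, (hmaj : IsMajorityOnPairs f), hclone⟩
  obtain ⟨N, hN⟩ := exists_nat_one_div_lt hβ
  have h01 : swapDistance (cloneProfile N) 0 1 ≤ β := by
    rw [swapDistance_cloneProfile_zero_one]
    refine le_trans ?_ hN.le
    gcongr
    push_cast
    linarith [N.cast_nonneg (α := ℝ)]
  have h10 : swapDistance (cloneProfile N) 1 0 ≤ β := swapDistance_comm _ 0 1 ▸ h01
  have h12 : swapDistance (cloneProfile N) 1 2 ≤ β := by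
    rw [swapDistance_cloneProfile_one_two]
    exact hβ.le
  have erase_a := hmaj.erase_zero_cloneProfile N
  have erase_b := hmaj.erase_one_cloneProfile N
  have hn : 1 ≤ N + N + 1 := by omega
  have clones := hclone univ _ hn (cloneProfile N)
  have hc : 2 ∉ f univ _ (cloneProfile N) := by
    rw [(clones 0 1 (mem_univ _) (mem_univ _) (by decide) h01).1 2 (by decide) (by decide), erase_a]
    decide
  have ha : 0 ∉ f univ _ (cloneProfile N) := by
    rw [(clones 1 2 (mem_univ _) (mem_univ _) (by decide) h12).1 0 (by decide) (by decide), erase_b]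
    decide
  have hb : 1 ∈ f univ _ (cloneProfile N) := by
    obtain ⟨s, hs⟩ := (hrule univ _ _ univ_nonempty hn).1
    have hs1 : ∀ s : Fin 3, s ≠ 0 → s ≠ 2 → s = 1 := by decide
    rwa [← hs1 s (ne_of_mem_of_not_mem hs ha) (ne_of_mem_of_not_mem hs hc)]
  have hba := (clones 1 0 (mem_univ _) (mem_univ _) (by decide) h10).2.1 ⟨1, by simp [hb]⟩
  rw [erase_b] at hba
  exact absurd hba (by decide)
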